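/- arXiv:0904.4230 — 2 statements merged into one kernel-verified Lean document; each statement's English description precedes it below -/
import Mathlib

section
/- Let H be a semigroup and G an H-group satisfying H-max-n. Then the space 𝒩_H(G) is scattered, and cb_H(G) ≤ ℓ_H(G). -/
noncomputable section

/-- Chabauty topology on the set of subgroups of `G`: the topology induced from the
product topology on `{0,1}^G` via indicator functions. -/
noncomputable instance chabautyTopology {G : Type*} [Group G] : TopologicalSpace (Subgroup G) :=
  TopologicalSpace.induced (fun N g => @decide (g ∈ N) (Classical.propDecidable _))
    (inferInstance : TopologicalSpace (G → Bool))

/-- Iterated Cantor–Bendixson derivatives of the space `X`: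
`X^(0) = X`, `X^(α+1)` is the set of accumulation points of `X^(α)`, and
`X^(λ) = ⋂_{β<λ} X^(β)` for limit `λ`. -/
noncomputable def cbD (X : Type*) [TopologicalSpace X] (o : Ordinal) : Set X :=
  Ordinal.limitRecOn o Set.univ (fun _ ih => {x | AccPt x (Filter.principal ih)})
    (fun o _ ih => ⋂ β : Set.Iio o, ih β.1 β.2)

/-- The point `x` has Cantor–Bendixson rank exactly `α` in `X`: it belongs to the `α`-th
derivative but not to the `(α+1)`-st (so `α` is the largest ordinal with `x ∈ X^(α)`). -/
def CBRankEq {X : Type*} [TopologicalSpace X] (x : X) (α : Ordinal) : Prop :=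
  x ∈ cbD X α ∧ x ∉ cbD X (α + 1)

/-- The Cantor–Bendixson rank of a point: the largest `α` with `x ∈ X^(α)`
(the set of such `α` is an initial segment of the ordinals, closed under limits). -/
noncomputable def cbRank {X : Type*} [TopologicalSpace X] (x : X) : Ordinal :=
  sSup {α | x ∈ cbD X α}

/-- The trivial subgroup, as a point of the space `𝒩(G)` of normal subgroups of `G`
(with its Chabauty topology); `cb(G)` is the Cantor–Bendixson rank of this point. -/
def nsBot (G : Type*) [Group G] : {N : Subgroup G // N.Normal} := ⟨⊥, inferInstance⟩

universe u

open Classical in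
/-- The ordinal-valued "length" attached to an element of a poset `L`, defined by
well-founded recursion on `>` (available under the max-n condition, i.e. well-foundedness
of `>`; junk value `0` otherwise): `gtRank x = sup { gtRank y + 1 : y > x }`.

For `L` the lattice of (`H`-stable) normal subgroups of a group `G` (resp. of submodules
of a module `M`), `gtRank N` is the ordinal length `ℓ(G/N)` (resp. `ℓ(M/N)`) of the
quotient, since (`H`-stable) normal subgroups of `G/N` correspond to those of `G`
containing `N`; in particular `gtRank ⊥ = ℓ(G)` (resp. `ℓ(M)`). -/
noncomputable def gtRank {L : Type u} [Preorder L] (x : L) : Ordinal.{u} :=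
  if h : WellFounded ((· > ·) : L → L → Prop) then (h.apply x).rank else 0

/-- An `H`-group structure on `G` (for `H` a semigroup) is an action of `H` on `G` by group
endomorphisms, i.e. a semigroup homomorphism `H → End(G)`. A normal subgroup `N` is
`H`-stable if it is invariant under the action. -/
def HStable {H G : Type*} [Mul H] [Group G] (act : H →ₙ* Monoid.End G)
    (N : Subgroup G) : Prop :=
  ∀ (h : H) (g : G), g ∈ N → act h g ∈ N

/-- The trivial subgroup as a point of the space `𝒩_H(G)` of `H`-stable normal
subgroups of `G`. -/
def hBot {H G : Type*} [Mul H] [Group G] (act : H →ₙ* Monoid.End G) :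
    {N : Subgroup G // N.Normal ∧ HStable act N} :=
  ⟨⊥, inferInstance, fun h g hg => by
    rw [Subgroup.mem_bot] at hg ⊢
    rw [hg, map_one]⟩

/-- The trivial subgroup as an element of the lattice of `H`-stable normal subgroups of `G`
contained in `M`; this lattice is the lattice of `GH`-stable normal subgroups of the
`GH`-group `M` (where `GH = G ⋊ H` acts on the normal subgroup `M` by conjugation and by
the `H`-action), so that `gtRank` of this element is the length `ℓ_{GH}(M)`. -/
def hBotIn {H G : Type*} [Mul H] [Group G] (act : H →ₙ* Monoid.End G) (M : Subgroup G) :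
    {K : Subgroup G // (K.Normal ∧ HStable act K) ∧ K ≤ M} :=
  ⟨⊥, ⟨inferInstance, fun h g hg => by
    rw [Subgroup.mem_bot] at hg ⊢
    rw [hg, map_one]⟩, bot_le⟩

/-! Under `H`-max-n every `H`-stable normal subgroup `N` is the `H`-normal closure of a finite
set `F`, so `{M | F ⊆ M}` is a Chabauty neighbourhood of `N` all of whose points contain `N`.
Any point of `𝒩_H(G)` near `N` other than `N` therefore lies strictly above `N` and has smaller
length, and well-founded induction gives `N ∉ 𝒩_H(G)^(ℓ_H(G/N)+1)`. Every point lies above `{1}`,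
so the derivative of order `ℓ_H(G) + 1` is empty. -/

open Filter Topology

section CantorBendixson

variable {X : Type*} [TopologicalSpace X]

theorem cbD_zero : cbD X 0 = Set.univ :=
  Ordinal.limitRecOn_zero ..

theorem cbD_add_one (o : Ordinal) : cbD X (o + 1) = derivedSet (cbD X o) := by
  rw [cbD, Ordinal.limitRecOn_add_one]
  rfl

theorem cbD_of_isSuccLimit {o : Ordinal} (ho : Order.IsSuccLimit o) :
    cbD X o = ⋂ β : Set.Iio o, cbD X β.1 := by
  rw [cbD, Ordinal.limitRecOn_limit _ _ _ _ ho]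
  rfl

variable [T1Space X]

theorem isClosed_cbD (o : Ordinal) : IsClosed (cbD X o) := by
  induction o using Ordinal.limitRecOn with
  | zero => simpa only [cbD_zero] using isClosed_univ
  | add_one o _ => simpa only [cbD_add_one] using isClosed_derivedSet _
  | limit o ho ih =>
    rw [cbD_of_isSuccLimit ho]
    exact isClosed_iInter fun β => ih β.1 β.2

theorem cbD_add_one_subset (o : Ordinal) : cbD X (o + 1) ⊆ cbD X o := by
  rw [cbD_add_one]
  exact (isClosed_iff_derivedSet_subset _).mp (isClosed_cbD o)

theorem cbD_antitone : Antitone (cbD X) := by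
  intro α β hαβ
  induction β using Ordinal.limitRecOn with
  | zero => rw [nonpos_iff_eq_zero.mp hαβ]
  | add_one β ih =>
    rcases hαβ.eq_or_lt with rfl | hlt
    · exact subset_rfl
    · exact (cbD_add_one_subset β).trans (ih (Order.lt_add_one_iff.mp hlt))
  | limit β hβ _ =>
    rcases hαβ.eq_or_lt with rfl | hlt
    · exact subset_rfl
    · rw [cbD_of_isSuccLimit hβ]
      exact Set.iInter_subset_of_subset ⟨α, hlt⟩ subset_rfl

end CantorBendixson

section GtRank

variable {L : Type u} [Preorder L] [WellFoundedGT L]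

theorem gtRank_eq_rank (x : L) : gtRank x = IsWellFounded.rank (· > ·) x := by
  rw [gtRank, dif_pos wellFounded_gt]
  rfl

theorem gtRank_strictAnti : StrictAnti (gtRank : L → Ordinal) := fun x y hxy => by
  rw [gtRank_eq_rank, gtRank_eq_rank]
  exact WellFoundedGT.rank_strictAnti hxy

end GtRank

section OrderedScattered

variable {X : Type u} [TopologicalSpace X] [T1Space X] [PartialOrder X] [WellFoundedGT X]

theorem notMem_cbD_gtRank_add_one (hIci : ∀ x : X, Set.Ici x ∈ 𝓝 x) (x : X) :
    x ∉ cbD X (gtRank x + 1) := by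
  induction x using WellFoundedGT.induction with
  | _ x ih =>
  intro hx
  rw [cbD_add_one, mem_derivedSet, accPt_iff_nhds] at hx
  obtain ⟨y, ⟨hxy, hy⟩, hyx⟩ := hx _ (hIci x)
  have hlt : x < y := hxy.lt_of_ne' hyx
  exact ih y hlt (cbD_antitone (Order.add_one_le_of_lt (gtRank_strictAnti hlt)) hy)

theorem cbD_gtRank_add_one_eq_empty (hIci : ∀ x : X, Set.Ici x ∈ 𝓝 x) {x : X}
    (hx : ∀ y, x ≤ y) : cbD X (gtRank x + 1) = ∅ :=
  Set.eq_empty_of_forall_notMem fun y hy => notMem_cbD_gtRank_add_one hIci y <|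
    cbD_antitone (add_le_add_left (gtRank_strictAnti.antitone (hx y)) 1) hy

end OrderedScattered

namespace Subgroup

variable {G : Type*} [Group G]

theorem isEmbedding_chabauty :
    IsEmbedding (fun N g => @decide (g ∈ N) (Classical.propDecidable _) :
      Subgroup G → G → Bool) :=
  ⟨⟨rfl⟩, fun N M h => by
    ext g
    simpa only [decide_eq_decide] using congrFun h g⟩

instance : T2Space (Subgroup G) :=
  isEmbedding_chabauty.t2Space

theorem isOpen_setOf_mem (g : G) : IsOpen {N : Subgroup G | g ∈ N} := by
  have hcont : Continuous fun N : Subgroup G => @decide (g ∈ N) (Classical.propDecidable _) :=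
    (continuous_apply g).comp isEmbedding_chabauty.continuous
  simpa only [Set.preimage, Set.mem_singleton_iff, decide_eq_true_eq] using
    (isOpen_discrete {true}).preimage hcont

theorem isOpen_setOf_coe_subset (F : Finset G) : IsOpen {N : Subgroup G | (F : Set G) ⊆ N} := by
  have hF : {N : Subgroup G | (F : Set G) ⊆ N} = ⋂ g ∈ F, {N | g ∈ N} := by
    ext N
    simp [Set.subset_def]
  rw [hF]
  exact isOpen_biInter_finset fun g _ => isOpen_setOf_mem g

end Subgroup

section ClosureBy

variable {G : Type*} [Group G] (P : Subgroup G → Prop)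

def closureBy (s : Set G) : Subgroup G :=
  sInf {K | P K ∧ s ⊆ K}

theorem closureBy_le {s : Set G} {K : Subgroup G} (hK : P K) (hs : s ⊆ K) :
    closureBy P s ≤ K :=
  sInf_le ⟨hK, hs⟩

theorem subset_closureBy (s : Set G) : s ⊆ closureBy P s := fun _ hg =>
  Subgroup.mem_sInf.mpr fun _ hK => hK.2 hg

theorem closureBy_mono : Monotone (closureBy P) := fun _ _ hst =>
  sInf_le_sInf fun _ hK => ⟨hK.1, hst.trans hK.2⟩

variable {P} (hP : ∀ S : Set (Subgroup G), (∀ K ∈ S, P K) → P (sInf S))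
include hP

theorem closureBy_prop (s : Set G) : P (closureBy P s) :=
  hP _ fun _ hK => hK.1

theorem exists_finset_closureBy_eq [WellFoundedGT {K // P K}] {N : Subgroup G} (hN : P N) :
    ∃ F : Finset G, closureBy P F = N := by
  classical
  -- Take `F ⊆ N` finite with `closureBy P F` maximal; then no `g ∈ N` can lie outside it.
  let cl : Finset G → {K // P K} := fun F => ⟨closureBy P F, closureBy_prop hP F⟩
  obtain ⟨F, hFN, hFmax⟩ := (InvImage.wf cl wellFounded_gt).has_min
    {F : Finset G | (F : Set G) ⊆ N} ⟨∅, by simp⟩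
  refine ⟨F, le_antisymm (closureBy_le P hN hFN) fun g hg => ?_⟩
  by_contra hgF
  have hle : cl F ≤ cl (insert g F) :=
    closureBy_mono P (by simp only [Finset.coe_insert, Set.subset_insert])
  have hg' : g ∈ (cl (insert g F)).1 := subset_closureBy P _ (by simp)
  have hne : cl F ≠ cl (insert g F) := fun h => hgF (by change g ∈ (cl F).1; rwa [h])
  refine hFmax (insert g F) ?_ (hle.lt_of_ne hne)
  change ((insert g F : Finset G) : Set G) ⊆ N
  rw [Finset.coe_insert]
  exact Set.insert_subset hg hFN

theorem Ici_mem_nhds_of_wellFoundedGT [WellFoundedGT {K // P K}] (N : {K // P K}) :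
    Set.Ici N ∈ 𝓝 N := by
  obtain ⟨F, hF⟩ := exists_finset_closureBy_eq hP N.2
  have hU : IsOpen {M : {K // P K} | (F : Set G) ⊆ M.1} :=
    (Subgroup.isOpen_setOf_coe_subset F).preimage continuous_subtype_val
  refine mem_of_superset (hU.mem_nhds ?_) fun M hM => ?_
  · change (F : Set G) ⊆ N.1
    rw [← hF]
    exact subset_closureBy P _
  · change N.1 ≤ M.1
    rw [← hF]
    exact closureBy_le P M.2 hM

end ClosureBy

theorem normal_and_hStable_sInf {H G : Type*} [Mul H] [Group G] (act : H →ₙ* Monoid.End G)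
    (S : Set (Subgroup G)) (hS : ∀ K ∈ S, K.Normal ∧ HStable act K) :
    (sInf S).Normal ∧ HStable act (sInf S) :=
  ⟨⟨fun n hn g => Subgroup.mem_sInf.mpr fun K hK =>
      (hS K hK).1.conj_mem n (Subgroup.mem_sInf.mp hn K hK) g⟩,
    fun h g hg => Subgroup.mem_sInf.mpr fun K hK =>
      (hS K hK).2 h g (Subgroup.mem_sInf.mp hg K hK)⟩

/-- Let `H` be a semigroup and `G` an `H`-group satisfying `H`-max-n
(well-foundedness of `>` on the lattice `𝒩_H(G)` of `H`-stable normal subgroups). Then the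
space `𝒩_H(G)` is scattered (some Cantor–Bendixson derivative is empty), and
`cb_H(G) ≤ ℓ_H(G)` (the rank of `{1}` exists and is at most the ordinal length of `G`,
which is `gtRank` of the trivial subgroup in the lattice `𝒩_H(G)`). -/
theorem scattered_and_cb_le_length_of_hMaxn {H : Type*} [Semigroup H] {G : Type u} [Group G]
    (act : H →ₙ* Monoid.End G)
    (hmax : WellFounded ((· > ·) :
      {N : Subgroup G // N.Normal ∧ HStable act N} →
        {N : Subgroup G // N.Normal ∧ HStable act N} → Prop)) :
    (∃ α : Ordinal.{u}, cbD {N : Subgroup G // N.Normal ∧ HStable act N} α = ∅) ∧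
    hBot act ∉ cbD {N : Subgroup G // N.Normal ∧ HStable act N} (gtRank (hBot act) + 1) := by
  have : WellFoundedGT {N : Subgroup G // N.Normal ∧ HStable act N} := ⟨hmax⟩
  have hIci := Ici_mem_nhds_of_wellFoundedGT (normal_and_hStable_sInf act)
  have hBot_le : ∀ M, hBot act ≤ M := fun M => show ⊥ ≤ M.1 from bot_le
  exact ⟨⟨_, cbD_gtRank_add_one_eq_empty hIci hBot_le⟩, notMem_cbD_gtRank_add_one hIci _⟩
end
end

section
/- Let G be a finite group of order n acting by ring automorphisms on a commutative noetherian ring A of finite Krull dimension d, and let M be a finitely generated GA-module whose Krull dimension as an A-module is at most d. Write ℓ_A(M) = ω^d·ℓ_d(M) + ρ and ℓ_{GA}(M) = ω^d·ℓ_{G,d}(M) + ρ' with ordinals ρ, ρ' < ω^d and non-negative integers ℓ_d(M), ℓ_{G,d}(M). Then ℓ_{G,d}(M) ≤ ℓ_d(M) ≤ n·ℓ_{G,d}(M). -/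
/-!
Let `τ` be an action of a finite group of order `n` by order automorphisms on a modular lattice
with the ascending chain condition (here: `G` acting on the submodules of `M`), and write
`ℓ(b/x)` for the ordinal length of an interval `[x, b]`; `ℓ_{GA}` is the length computed inside
the sublattice of fixed points. Brookfield's inequalities
`ℓ(b/a) + ℓ(a/x) ≤ ℓ(b/x) ≤ ℓ(b/a) ♯ ℓ(a/x)` (with `♯` the natural sum) make the coefficient of
`ω^e` additive along chains, as long as it is finite, both in the lattice and in the fixed
sublattice. The lower bound `ℓ_{G,d} ≤ ℓ_d` is then monotonicity of length under restriction
to fixed points.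

For the upper bound one shows `ℓ_{GA}(b/x) < ω^e(k+1) → ℓ(b/x) < ω^e(nk+1)` for fixed `x ≤ b`,
by induction on `e` and then on `k`. Let `w` be a maximal fixed element of `[x, b]` with
`ℓ_{GA}(w/x) < ω^e`; by induction on `e`, also `ℓ(w/x) < ω^e`, and by maximality every fixed
`z > w` has `ℓ_{GA}(b/z) < ω^e k`, hence `ℓ(b/z) < ω^e(n(k-1)+1)`. Now pick any `y > w`
with `ℓ(y/w) < ω^e·2`: the orbit supremum `z = ⨆ g•y` is fixed, and `ℓ(z/w) < ω^e(n+1)` since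
each `g•y` contributes at most one `ω^e`, so `ℓ(b/w) ≤ ℓ(b/z) ♯ ℓ(z/w)` gains at most `n`.
Such a `y` exists once the `ω^e`-coefficient of `ℓ(b/w)` is finite, and that follows from the
dual argument with the orbit infimum `⨅ g•y` of a `y` of large colength.
-/

noncomputable section

universe u

namespace Ordinal

/-- Hessenberg's natural sum. -/
def nadd (a b : Ordinal.{u}) : Ordinal.{u} :=
  max (⨆ a' : Set.Iio a, Order.succ (nadd a'.1 b)) (⨆ b' : Set.Iio b, Order.succ (nadd a b'.1))
termination_by (a, b)
decreasing_by
  · exact Prod.Lex.left _ _ a'.2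
  · exact Prod.Lex.right _ b'.2

infixl:65 " ♯ " => nadd

theorem nadd_le_iff {a b c : Ordinal.{u}} :
    a ♯ b ≤ c ↔ (∀ a' < a, a' ♯ b < c) ∧ ∀ b' < b, a ♯ b' < c := by
  rw [nadd, max_le_iff, Ordinal.iSup_le_iff, Ordinal.iSup_le_iff]
  simp only [Order.succ_le_iff, Subtype.forall, Set.mem_Iio]

theorem nadd_lt_nadd_right {a' a : Ordinal.{u}} (h : a' < a) (b : Ordinal.{u}) :
    a' ♯ b < a ♯ b :=
  (nadd_le_iff.1 le_rfl).1 a' h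

theorem nadd_lt_nadd_left {b' b : Ordinal.{u}} (h : b' < b) (a : Ordinal.{u}) :
    a ♯ b' < a ♯ b :=
  (nadd_le_iff.1 le_rfl).2 b' h

theorem nadd_comm (a b : Ordinal.{u}) : a ♯ b = b ♯ a := by
  rw [nadd.eq_1 a b, nadd.eq_1 b a, max_comm]
  congr 1 <;> refine congrArg _ (funext fun x => congrArg _ (nadd_comm _ _))
termination_by (a, b)
decreasing_by
  · exact Prod.Lex.right _ x.2
  · exact Prod.Lex.left _ _ x.2

theorem nadd_lt_nadd_of_lt_of_le {a a' b b' : Ordinal.{u}} (ha : a < a') (hb : b ≤ b') :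
    a ♯ b < a' ♯ b' := by
  obtain hb | rfl := hb.lt_or_eq
  exacts [(nadd_lt_nadd_right ha b).trans (nadd_lt_nadd_left hb a'), nadd_lt_nadd_right ha b]

theorem nadd_lt_nadd_of_le_of_lt {a a' b b' : Ordinal.{u}} (ha : a ≤ a') (hb : b < b') :
    a ♯ b < a' ♯ b' := by
  rw [nadd_comm, nadd_comm a']
  exact nadd_lt_nadd_of_lt_of_le hb ha

theorem nadd_le_nadd {a a' b b' : Ordinal.{u}} (ha : a ≤ a') (hb : b ≤ b') :
    a ♯ b ≤ a' ♯ b' := by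
  obtain ha | rfl := ha.lt_or_eq
  · exact (nadd_lt_nadd_of_lt_of_le ha hb).le
  obtain hb | rfl := hb.lt_or_eq
  exacts [(nadd_lt_nadd_left hb a).le, le_rfl]

variable {W : Ordinal.{u}}

theorem exists_le_mul_add_of_lt_mul_succ {p : ℕ} {a : Ordinal.{u}} (h : a < W * (p + 1 : ℕ)) :
    ∃ c < W, a ≤ W * p + c := by
  rw [Nat.cast_succ, mul_add_one] at h
  have hW : 0 < W := pos_iff_ne_zero.2 fun hW => by simp [hW] at h
  exact ⟨a - W * p, sub_lt_of_lt_add h hW, le_add_sub _ _⟩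

theorem exists_lt_lt_add_mul_two {C : ℕ} {a : Ordinal.{u}} (ha : 0 < a)
    (hC : a < W * (C + 1 : ℕ)) : ∃ c < a, a < c + W * (1 + 1 : ℕ) := by
  induction C with
  | zero =>
    refine ⟨0, ha, hC.trans_le ((mul_le_mul_right ?_ _).trans_eq (zero_add _).symm)⟩
    exact_mod_cast Nat.le_succ _
  | succ C ih =>
    by_cases h : a < W * (C + 1 : ℕ)
    · exact ih h
    have hW : 0 < W := pos_iff_ne_zero.2 fun hW => by simp [hW] at hC
    refine ⟨W * C, lt_of_lt_of_le ?_ (not_lt.1 h), ?_⟩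
    · rw [Nat.cast_succ, mul_add_one]
      exact lt_add_of_pos_right _ hW
    · rwa [← mul_add, ← Nat.cast_add, ← Nat.add_assoc]

theorem IsPrincipal.exists_lex_lt_of_lt_mul_add (hW : IsPrincipal (· ♯ ·) W) {p : ℕ}
    {a' c : Ordinal.{u}} (hc : c < W) (h : a' < W * p + c) :
    ∃ p' : ℕ, ∃ c' < W, a' ≤ W * p' + c' ∧
      ∀ (q : ℕ), ∀ d < W, W * (p' + q : ℕ) + (c' ♯ d) < W * (p + q : ℕ) + (c ♯ d) := by
  by_cases hp : W * p ≤ a'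
  · have hc' : a' - W * p < c := by
      rwa [← add_lt_add_iff_left (W * p), Ordinal.add_sub_cancel_of_le hp]
    refine ⟨p, a' - W * p, hc'.trans hc, le_add_sub _ _, fun q d _ => ?_⟩
    exact add_lt_add_right (nadd_lt_nadd_right hc' d) _
  · obtain ⟨p, rfl⟩ : ∃ p₀, p = p₀ + 1 :=
      Nat.exists_eq_add_one.2 (Nat.pos_of_ne_zero (by rintro rfl; simp at hp))
    obtain ⟨c', hc', ha'⟩ := exists_le_mul_add_of_lt_mul_succ (not_le.1 hp)
    refine ⟨p, c', hc', ha', fun q d hd => ?_⟩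
    calc W * (p + q : ℕ) + (c' ♯ d) < W * (p + q : ℕ) + W := add_lt_add_right (hW hc' hd) _
      _ = W * (p + 1 + q : ℕ) := by rw [← mul_add_one, ← Nat.cast_succ, Nat.add_right_comm]
      _ ≤ W * (p + 1 + q : ℕ) + (c ♯ d) := le_self_add

theorem IsPrincipal.nadd_le_mul_add (hW : IsPrincipal (· ♯ ·) W) {p q : ℕ}
    {a b c d : Ordinal.{u}} (hc : c < W) (hd : d < W) (ha : a ≤ W * p + c)
    (hb : b ≤ W * q + d) : a ♯ b ≤ W * (p + q : ℕ) + (c ♯ d) := by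
  refine nadd_le_iff.2 ⟨fun a' ha' => ?_, fun b' hb' => ?_⟩
  · obtain ⟨p', c', hc', ha'', hlt⟩ := hW.exists_lex_lt_of_lt_mul_add hc (ha'.trans_le ha)
    exact (hW.nadd_le_mul_add hc' hd ha'' hb).trans_lt (hlt q d hd)
  · obtain ⟨q', d', hd', hb'', hlt⟩ := hW.exists_lex_lt_of_lt_mul_add hd (hb'.trans_le hb)
    calc a ♯ b' ≤ W * (p + q' : ℕ) + (c ♯ d') := hW.nadd_le_mul_add hc hd' ha hb''
      _ = W * (q' + p : ℕ) + (d' ♯ c) := by rw [Nat.add_comm, nadd_comm]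
      _ < W * (q + p : ℕ) + (d ♯ c) := hlt p c hc
      _ = W * (p + q : ℕ) + (c ♯ d) := by rw [Nat.add_comm, nadd_comm]
termination_by (a, b)
decreasing_by
  · exact Prod.Lex.left _ _ ha'
  · exact Prod.Lex.right _ hb'

theorem IsPrincipal.nadd_lt_mul (hW : IsPrincipal (· ♯ ·) W) {p q : ℕ} {a b : Ordinal.{u}}
    (ha : a < W * (p + 1 : ℕ)) (hb : b < W * (q + 1 : ℕ)) : a ♯ b < W * (p + q + 1 : ℕ) := by
  obtain ⟨c, hc, ha⟩ := exists_le_mul_add_of_lt_mul_succ ha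
  obtain ⟨d, hd, hb⟩ := exists_le_mul_add_of_lt_mul_succ hb
  calc a ♯ b ≤ W * (p + q : ℕ) + (c ♯ d) := hW.nadd_le_mul_add hc hd ha hb
    _ < W * (p + q : ℕ) + W := add_lt_add_right (hW hc hd) _
    _ = W * (p + q + 1 : ℕ) := by rw [Nat.cast_succ _, mul_add_one]

theorem lt_opow_succ_iff {e : ℕ} {a : Ordinal.{u}} :
    a < ω ^ ((e + 1 : ℕ) : Ordinal) ↔ ∃ p : ℕ, a < ω ^ (e : Ordinal) * (p + 1 : ℕ) := by
  rw [Nat.cast_succ, ← Order.succ_eq_add_one, lt_omega0_opow_succ]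
  refine ⟨fun ⟨n, h⟩ => ⟨n, h.trans_le ?_⟩, fun ⟨p, h⟩ => ⟨p + 1, h⟩⟩
  exact mul_le_mul_right (by exact_mod_cast n.le_succ) _

theorem isPrincipal_nadd_opow (e : ℕ) : IsPrincipal (· ♯ ·) (ω ^ (e : Ordinal.{u})) := by
  induction e with
  | zero =>
    intro a b ha hb
    simp only [Nat.cast_zero, opow_zero, Order.lt_one_iff] at ha hb ⊢
    subst ha hb
    exact nonpos_iff_eq_zero.1 (nadd_le_iff.2 ⟨fun _ h => (not_lt_zero h).elim,
      fun _ h => (not_lt_zero h).elim⟩)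
  | succ e ih =>
    intro a b ha hb
    obtain ⟨p, ha⟩ := lt_opow_succ_iff.1 ha
    obtain ⟨q, hb⟩ := lt_opow_succ_iff.1 hb
    exact lt_opow_succ_iff.2 ⟨p + q, ih.nadd_lt_mul ha hb⟩

theorem nadd_lt_opow_mul {e p q : ℕ} {a b : Ordinal.{u}}
    (ha : a < ω ^ (e : Ordinal) * (p + 1 : ℕ)) (hb : b < ω ^ (e : Ordinal) * (q + 1 : ℕ)) :
    a ♯ b < ω ^ (e : Ordinal) * (p + q + 1 : ℕ) :=
  (isPrincipal_nadd_opow e).nadd_lt_mul ha hb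

theorem opow_mul_lt_opow_mul_iff {e p q : ℕ} :
    ω ^ (e : Ordinal.{u}) * p < ω ^ (e : Ordinal.{u}) * q ↔ p < q := by
  rw [mul_lt_mul_iff_of_pos_left (opow_pos _ omega0_pos), Nat.cast_lt]

theorem opow_mul_succ_pos (e k : ℕ) : 0 < ω ^ (e : Ordinal.{u}) * (k + 1 : ℕ) :=
  mul_pos (opow_pos _ omega0_pos) (by exact_mod_cast k.succ_pos)

theorem opow_mul_add_lt {e k : ℕ} {r : Ordinal.{u}} (hr : r < ω ^ (e : Ordinal)) :
    ω ^ (e : Ordinal) * k + r < ω ^ (e : Ordinal) * (k + 1 : ℕ) := by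
  rw [Nat.cast_succ, mul_add_one]
  exact add_lt_add_right hr _

theorem le_of_opow_mul_le_of_lt {e p q : ℕ} {a : Ordinal.{u}} (hp : ω ^ (e : Ordinal) * p ≤ a)
    (hq : a < ω ^ (e : Ordinal) * (q + 1 : ℕ)) : p ≤ q :=
  Nat.lt_succ_iff.1 (opow_mul_lt_opow_mul_iff.1 (hp.trans_lt hq))

end Ordinal

open Ordinal

section Length

variable {L : Type u} [PartialOrder L] [WellFoundedGT L]

def AboveWithin (b y x : L) : Prop := x < y ∧ y ≤ b

theorem wellFounded_aboveWithin (b : L) : WellFounded (AboveWithin b) :=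
  Subrelation.wf (fun h => h.1) wellFounded_gt

/-- The ordinal length `ℓ(b/x)` of the interval `[x, b]`. -/
def len (x b : L) : Ordinal.{u} := ((wellFounded_aboveWithin b).apply x).rank

theorem len_lt_len {x y b : L} (hxy : x < y) (hyb : y ≤ b) : len y b < len x b :=
  Acc.rank_lt_of_rel _ (show AboveWithin b y x from ⟨hxy, hyb⟩)

theorem len_le_of_forall {x b : L} {c : Ordinal.{u}}
    (H : ∀ y, x < y → y ≤ b → len y b < c) : len x b ≤ c := by
  rw [len, Acc.rank_eq]
  exact Ordinal.iSup_le fun y => Order.succ_le_of_lt (H y.1 y.2.1 y.2.2)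

theorem gtRank_eq_len {x b : L} (hb : ∀ y, y ≤ b) : gtRank x = len x b := by
  have hrel : (· > ·) = AboveWithin b := by
    funext y z
    simp [AboveWithin, hb]
  have rank_congr : ∀ {r s : L → L → Prop}, r = s → ∀ (hr : Acc r x) (hs : Acc s x),
      hr.rank = hs.rank := by
    rintro r s rfl hr hs
    rfl
  rw [gtRank, dif_pos wellFounded_gt, len]
  exact rank_congr hrel _ _

theorem exists_le_len_of_lt_len {x b : L} {c : Ordinal.{u}} (h : c < len x b) :
    ∃ y, x < y ∧ y ≤ b ∧ c ≤ len y b := by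
  by_contra! H
  exact (len_le_of_forall H).not_gt h

theorem exists_len_eq_of_lt_len {x b : L} {c : Ordinal.{u}} (h : c < len x b) :
    ∃ y, x < y ∧ y ≤ b ∧ len y b = c := by
  induction x using WellFoundedGT.induction with
  | _ x ih =>
    obtain ⟨y, hxy, hyb, hy⟩ := exists_le_len_of_lt_len h
    obtain hy | hy := hy.lt_or_eq
    · obtain ⟨z, hyz, hzb, hz⟩ := ih y hxy hy
      exact ⟨z, hxy.trans hyz, hzb, hz⟩
    · exact ⟨y, hxy, hyb, hy.symm⟩

theorem len_anti_left {x x' b : L} (h : x ≤ x') : len x' b ≤ len x b :=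
  len_le_of_forall fun _ hy hyb => len_lt_len (h.trans_lt hy) hyb

theorem len_mono_right {x b b' : L} (h : b ≤ b') : len x b ≤ len x b' := by
  induction x using WellFoundedGT.induction with
  | _ x ih =>
    exact len_le_of_forall fun y hxy hyb => (ih y hxy).trans_lt (len_lt_len hxy (hyb.trans h))

theorem len_self (b : L) : len b b = 0 :=
  nonpos_iff_eq_zero.1 (len_le_of_forall fun _ hby hyb => absurd (hby.trans_le hyb) (lt_irrefl b))

theorem len_pos {x b : L} (h : x < b) : 0 < len x b :=
  len_self b ▸ len_lt_len h le_rfl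

theorem len_le_len_of_strictMonoOn {L' : Type u} [PartialOrder L'] [WellFoundedGT L']
    {f : L → L'} {x b : L} (hf : StrictMonoOn f (Set.Icc x b)) :
    len x b ≤ len (f x) (f b) := by
  induction x using WellFoundedGT.induction with
  | _ x ih =>
    refine len_le_of_forall fun y hxy hyb => ?_
    have hx : x ∈ Set.Icc x b := ⟨le_rfl, hxy.le.trans hyb⟩
    have hy : y ∈ Set.Icc x b := ⟨hxy.le, hyb⟩
    refine (ih y hxy (hf.mono (Set.Icc_subset_Icc_left hxy.le))).trans_lt ?_
    exact len_lt_len (hf hx hy hxy) (hf.monotoneOn hy ⟨hx.2, le_rfl⟩ hyb)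

theorem OrderIso.len_map {L' : Type u} [PartialOrder L'] [WellFoundedGT L'] (φ : L ≃o L')
    (x b : L) : len (φ x) (φ b) = len x b := by
  refine le_antisymm ?_ (len_le_len_of_strictMonoOn (φ.strictMono.strictMonoOn _))
  simpa using len_le_len_of_strictMonoOn (φ.symm.strictMono.strictMonoOn (Set.Icc (φ x) (φ b)))

theorem len_add_len_le {x a b : L} (hxa : x ≤ a) (hab : a ≤ b) :
    len a b + len x a ≤ len x b := by
  induction x using WellFoundedGT.induction with
  | _ x ih =>
    obtain h0 | h0 := eq_or_ne (len x a) 0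
    · rw [h0, add_zero]
      exact len_anti_left hxa
    refine (add_le_iff h0).2 fun c hc => ?_
    obtain ⟨y, hxy, hya, hy⟩ := exists_le_len_of_lt_len hc
    calc len a b + c ≤ len a b + len y a := add_le_add_right hy _
      _ ≤ len y b := ih y hxy hya
      _ < len x b := len_lt_len hxy (hya.trans hab)

theorem exists_lt_le_len_lt_mul_two {W : Ordinal.{u}} {C : ℕ} {w b : L} (hwb : w < b)
    (hC : len w b < W * (C + 1 : ℕ)) : ∃ y, w < y ∧ y ≤ b ∧ len w y < W * (1 + 1 : ℕ) := by
  obtain ⟨c, hc, hcb⟩ := exists_lt_lt_add_mul_two (len_pos hwb) hC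
  obtain ⟨y, hwy, hyb, hy⟩ := exists_le_len_of_lt_len hc
  refine ⟨y, hwy, hyb, (add_lt_add_iff_left c).1 ?_⟩
  calc c + len w y ≤ len y b + len w y := add_le_add_left hy _
    _ ≤ len w b := len_add_len_le hwy.le hyb
    _ < _ := hcb

end Length

section Modular

variable {L : Type u} [Lattice L] [IsModularLattice L] [WellFoundedGT L]

theorem len_le_len_sup_nadd_len_inf {a b : L} (hab : a ≤ b) (x : L) :
    len x b ≤ len (x ⊔ a) b ♯ len (x ⊓ a) a := by
  induction x using WellFoundedGT.induction with
  | _ x ih =>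
    refine len_le_of_forall fun y hxy hyb => (ih y hxy).trans_lt ?_
    obtain hsup | hsup := (sup_le_sup_right hxy.le a).lt_or_eq
    · exact nadd_lt_nadd_of_lt_of_le (len_lt_len hsup (sup_le hyb hab))
        (len_anti_left (inf_le_inf_right a hxy.le))
    · rw [hsup]
      exact nadd_lt_nadd_of_le_of_lt le_rfl
        (len_lt_len (inf_lt_inf_of_lt_of_sup_le_sup hxy hsup.ge) inf_le_right)

theorem len_le_len_nadd_len {x a b : L} (hxa : x ≤ a) (hab : a ≤ b) :
    len x b ≤ len a b ♯ len x a := by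
  simpa [sup_eq_right.2 hxa, inf_eq_left.2 hxa] using len_le_len_sup_nadd_len_inf hab x

theorem len_inf_left_eq_len_sup (u v : L) : len (u ⊓ v) u = len v (u ⊔ v) := by
  refine le_antisymm ?_ ?_
  · have hf : StrictMonoOn (· ⊔ v) (Set.Icc (u ⊓ v) u) := fun y hy z hz hyz =>
      sup_lt_sup_of_lt_of_inf_le_inf hyz
        (le_inf ((inf_le_inf_right v hz.2).trans hy.1) inf_le_right)
    simpa [sup_eq_right.2 (inf_le_right : u ⊓ v ≤ v)] using len_le_len_of_strictMonoOn hf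
  · have hf : StrictMonoOn (· ⊓ u) (Set.Icc v (u ⊔ v)) := fun y hy z hz hyz =>
      inf_lt_inf_of_lt_of_sup_le_sup hyz
        (sup_le (hz.2.trans (sup_comm u v ▸ sup_le_sup_right hy.1 u)) le_sup_right)
    simpa [inf_comm v u] using len_le_len_of_strictMonoOn hf

theorem len_sup_le_nadd {x y z : L} (hxy : x ≤ y) (hxz : x ≤ z) :
    len x (y ⊔ z) ≤ len x z ♯ len x y := by
  refine (len_le_len_nadd_len hxy le_sup_left).trans (nadd_le_nadd ?_ le_rfl)
  rw [sup_comm, ← len_inf_left_eq_len_sup]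
  exact len_anti_left (le_inf hxz hxy)

theorem len_inf_le_nadd {y z b : L} (hyb : y ≤ b) (hzb : z ≤ b) :
    len (y ⊓ z) b ≤ len y b ♯ len z b := by
  refine (len_le_len_nadd_len inf_le_left hyb).trans (nadd_le_nadd le_rfl ?_)
  rw [len_inf_left_eq_len_sup]
  exact len_mono_right (sup_le hyb hzb)

variable {ι : Type*} {e m : ℕ}

theorem len_sup_finset_lt [OrderBot L] {x : L} {f : ι → L} (s : Finset ι)
    (hx : ∀ i ∈ s, x ≤ f i) (hf : ∀ i ∈ s, len x (f i) < ω ^ (e : Ordinal) * (m + 1 : ℕ)) :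
    len x (x ⊔ s.sup f) < ω ^ (e : Ordinal) * (s.card * m + 1 : ℕ) := by
  induction s using Finset.cons_induction with
  | empty => simp [len_self]
  | cons i s hi ih =>
    rw [Finset.sup_cons, sup_left_comm, Finset.card_cons, Nat.succ_mul]
    have hs := ih (fun j hj => hx j (Finset.mem_cons_of_mem hj))
      (fun j hj => hf j (Finset.mem_cons_of_mem hj))
    exact (len_sup_le_nadd (hx i (Finset.mem_cons_self i s)) le_sup_left).trans_lt
      (nadd_lt_opow_mul hs (hf i (Finset.mem_cons_self i s)))

theorem len_inf_finset_lt [OrderTop L] {b : L} {f : ι → L} (s : Finset ι)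
    (hb : ∀ i ∈ s, f i ≤ b) (hf : ∀ i ∈ s, len (f i) b < ω ^ (e : Ordinal) * (m + 1 : ℕ)) :
    len (b ⊓ s.inf f) b < ω ^ (e : Ordinal) * (s.card * m + 1 : ℕ) := by
  induction s using Finset.cons_induction with
  | empty => simp [len_self]
  | cons i s hi ih =>
    rw [Finset.inf_cons, inf_left_comm, inf_comm, Finset.card_cons, Nat.succ_mul]
    have hs := ih (fun j hj => hb j (Finset.mem_cons_of_mem hj))
      (fun j hj => hf j (Finset.mem_cons_of_mem hj))
    exact (len_inf_le_nadd inf_le_left (hb i (Finset.mem_cons_self i s))).trans_lt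
      (nadd_lt_opow_mul hs (hf i (Finset.mem_cons_self i s)))

end Modular

instance Sublattice.isModularLattice {L : Type*} [Lattice L] [IsModularLattice L]
    (S : Sublattice L) : IsModularLattice S :=
  ⟨fun {_} y {_} h => (sup_inf_le_assoc_of_le (y : L) (Subtype.coe_le_coe.2 h) :)⟩

section GroupAction

variable {G : Type*} [Group G] {L : Type u} [CompleteLattice L] (τ : G →* L ≃o L)

def fixedSublattice : Sublattice L where
  carrier := {x | ∀ g, τ g x = x}
  supClosed' x hx y hy g := by simp only [map_sup, hx g, hy g]
  infClosed' x hx y hy g := by simp only [map_inf, hx g, hy g]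

variable {τ}

theorem iSup_orbit_mem_fixedSublattice (y : L) : ⨆ g, τ g y ∈ fixedSublattice τ := fun h => by
  simp only [OrderIso.map_iSup, ← RelIso.mul_apply, ← map_mul]
  exact (Equiv.mulLeft h).iSup_comp (g := fun g => τ g y)

theorem iInf_orbit_mem_fixedSublattice (y : L) : ⨅ g, τ g y ∈ fixedSublattice τ := fun h => by
  simp only [OrderIso.map_iInf, ← RelIso.mul_apply, ← map_mul]
  exact (Equiv.mulLeft h).iInf_comp (g := fun g => τ g y)

theorem le_iSup_orbit (y : L) : y ≤ ⨆ g, τ g y := le_iSup_of_le 1 (by simp)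

theorem iInf_orbit_le (y : L) : ⨅ g, τ g y ≤ y := iInf_le_of_le 1 (by simp)

theorem iSup_orbit_le {y b : L} (hb : b ∈ fixedSublattice τ) (hyb : y ≤ b) : ⨆ g, τ g y ≤ b :=
  iSup_le fun g => hb g ▸ (τ g).monotone hyb

theorem le_iInf_orbit {x y : L} (hx : x ∈ fixedSublattice τ) (hxy : x ≤ y) : x ≤ ⨅ g, τ g y :=
  le_iInf fun g => hx g ▸ (τ g).monotone hxy

variable [WellFoundedGT L] {e m : ℕ}

variable (τ) in
/-- Inside the fixed sublattice, `ω^e`-coefficient at most `k` forces `ω^e`-coefficient at most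
`|G| k` in `L`. -/
def FixedLengthBound (e k : ℕ) : Prop :=
  ∀ ⦃x b : fixedSublattice τ⦄, x ≤ b → len x b < ω ^ (e : Ordinal) * (k + 1 : ℕ) →
    len (x : L) b < ω ^ (e : Ordinal) * (Nat.card G * k + 1 : ℕ)

theorem fixedLengthBound_zero_zero : FixedLengthBound τ 0 0 := by
  intro x b hxb h
  obtain hxb | rfl := hxb.lt_or_eq
  · simp only [CharP.cast_eq_zero, opow_zero, zero_add, Nat.cast_one, mul_one,
      Order.lt_one_iff] at h
    exact absurd h (len_pos hxb).ne'
  · exact len_self (x : L) ▸ opow_mul_succ_pos _ _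

theorem fixedLengthBound_succ_zero (h : ∀ k, FixedLengthBound τ e k) :
    FixedLengthBound τ (e + 1) 0 := by
  intro x b hxb hlt
  obtain ⟨p, hp⟩ := lt_opow_succ_iff.1 (by simpa using hlt)
  simpa using lt_opow_succ_iff.2 ⟨_, h p hxb hp⟩

variable [Finite G] [IsModularLattice L]

theorem len_iSup_orbit_lt {x y : L} (hx : x ∈ fixedSublattice τ) (hxy : x ≤ y)
    (h : len x y < ω ^ (e : Ordinal) * (m + 1 : ℕ)) :
    len x (⨆ g, τ g y) < ω ^ (e : Ordinal) * (Nat.card G * m + 1 : ℕ) := by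
  have := Fintype.ofFinite G
  have hs := len_sup_finset_lt (f := fun g => τ g y) Finset.univ
    (fun g _ => hx g ▸ (τ g).monotone hxy) (fun g _ => by rwa [← hx g, OrderIso.len_map])
  rwa [Finset.sup_univ_eq_iSup, sup_eq_right.2 ((le_iSup_orbit y).trans' hxy), Finset.card_univ,
    ← Nat.card_eq_fintype_card] at hs

theorem len_iInf_orbit_lt {y b : L} (hb : b ∈ fixedSublattice τ) (hyb : y ≤ b)
    (h : len y b < ω ^ (e : Ordinal) * (m + 1 : ℕ)) :
    len (⨅ g, τ g y) b < ω ^ (e : Ordinal) * (Nat.card G * m + 1 : ℕ) := by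
  have := Fintype.ofFinite G
  have hs := len_inf_finset_lt (f := fun g => τ g y) Finset.univ
    (fun g _ => hb g ▸ (τ g).monotone hyb) (fun g _ => by rwa [← hb g, OrderIso.len_map])
  rwa [Finset.inf_univ_eq_iInf, inf_eq_right.2 ((iInf_orbit_le y).trans hyb), Finset.card_univ,
    ← Nat.card_eq_fintype_card] at hs

theorem exists_len_lt_of_forall_fixed_lt {w b : L} (hw : w ∈ fixedSublattice τ)
    (hb : b ∈ fixedSublattice τ) (hdrop : ∀ z ∈ fixedSublattice τ, w < z → z ≤ b →
      len z b < ω ^ (e : Ordinal) * (m + 1 : ℕ)) :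
    ∃ C : ℕ, len w b < ω ^ (e : Ordinal) * (C + 1 : ℕ) := by
  by_cases hle : len w b ≤ ω ^ (e : Ordinal) * (m + 1 : ℕ)
  · exact ⟨m + 1, hle.trans_lt (opow_mul_lt_opow_mul_iff.2 (Nat.lt_succ_self _))⟩
  obtain ⟨y, hwy, hyb, hy⟩ := exists_len_eq_of_lt_len (not_le.1 hle)
  have hcore : w = ⨅ g, τ g y := by
    refine (le_iInf_orbit hw hwy.le).eq_of_not_lt fun hlt => ?_
    refine (hdrop _ (iInf_orbit_mem_fixedSublattice y) hlt ((iInf_orbit_le y).trans hyb)).not_ge ?_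
    exact hy ▸ len_anti_left (iInf_orbit_le y)
  refine ⟨Nat.card G * (m + 1), hcore ▸ len_iInf_orbit_lt hb hyb ?_⟩
  exact hy.trans_lt (opow_mul_lt_opow_mul_iff.2 (Nat.lt_succ_self _))

theorem len_lt_of_forall_fixed_lt {w b : L} (hw : w ∈ fixedSublattice τ)
    (hb : b ∈ fixedSublattice τ) (hwb : w ≤ b) (hdrop : ∀ z ∈ fixedSublattice τ, w < z → z ≤ b →
      len z b < ω ^ (e : Ordinal) * (m + 1 : ℕ)) :
    len w b < ω ^ (e : Ordinal) * (m + Nat.card G + 1 : ℕ) := by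
  obtain hwb | rfl := hwb.lt_or_eq
  swap
  · exact len_self w ▸ opow_mul_succ_pos _ _
  obtain ⟨C, hC⟩ := exists_len_lt_of_forall_fixed_lt hw hb hdrop
  obtain ⟨y, hwy, hyb, hy⟩ := exists_lt_le_len_lt_mul_two hwb hC
  have hwz : w < ⨆ g, τ g y := hwy.trans_le (le_iSup_orbit y)
  have hzb : ⨆ g, τ g y ≤ b := iSup_orbit_le hb hyb
  calc len w b ≤ len (⨆ g, τ g y) b ♯ len w (⨆ g, τ g y) := len_le_len_nadd_len hwz.le hzb
    _ < ω ^ (e : Ordinal) * (m + Nat.card G * 1 + 1 : ℕ) :=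
      nadd_lt_opow_mul (hdrop _ (iSup_orbit_mem_fixedSublattice y) hwz hzb)
        (len_iSup_orbit_lt hw hwy.le hy)
    _ = ω ^ (e : Ordinal) * (m + Nat.card G + 1 : ℕ) := by rw [mul_one]

theorem fixedLengthBound_succ {k : ℕ} (h₀ : FixedLengthBound τ e 0)
    (hk : FixedLengthBound τ e k) : FixedLengthBound τ e (k + 1) := by
  intro x b hxb h
  set W : Ordinal.{u} := ω ^ (e : Ordinal)
  obtain ⟨w, ⟨hxw, hwb, hw⟩, hmax⟩ := wellFounded_gt.has_min
    {w : fixedSublattice τ | x ≤ w ∧ w ≤ b ∧ len x w < W}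
    ⟨x, le_rfl, hxb, len_self x ▸ opow_pos _ omega0_pos⟩
  have hfar : ∀ z : fixedSublattice τ, w < z → z ≤ b → W ≤ len w z := fun z hwz hzb =>
    not_lt.1 fun hz => hmax z ⟨hxw.trans hwz.le, hzb,
      (len_le_len_nadd_len hxw hwz.le).trans_lt (isPrincipal_nadd_opow e hz hw)⟩ hwz
  have hdrop : ∀ z ∈ fixedSublattice τ, (w : L) < z → z ≤ b →
      len z b < W * (Nat.card G * k + 1 : ℕ) := by
    intro z hz hwz hzb
    refine hk (x := ⟨z, hz⟩) hzb (not_le.1 fun hbig => (h.trans_le' ?_).false)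
    calc W * (k + 1 + 1 : ℕ) = W * (k + 1 : ℕ) + W := by rw [Nat.cast_succ (k + 1), mul_add_one]
      _ ≤ len ⟨z, hz⟩ b + len w ⟨z, hz⟩ := add_le_add hbig (hfar _ hwz hzb)
      _ ≤ len w b := len_add_len_le hwz.le hzb
      _ ≤ len x b := len_anti_left hxw
  calc len (x : L) b ≤ len (w : L) b ♯ len (x : L) w := len_le_len_nadd_len hxw hwb
    _ < W * (Nat.card G * k + Nat.card G + 0 + 1 : ℕ) :=
      nadd_lt_opow_mul (q := 0) (len_lt_of_forall_fixed_lt w.2 b.2 hwb hdrop)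
        (h₀ hxw (by simpa [W] using hw))
    _ = W * (Nat.card G * (k + 1) + 1 : ℕ) := by rw [Nat.add_zero, Nat.mul_succ]

theorem fixedLengthBound_of_zero (h₀ : FixedLengthBound τ e 0) (k : ℕ) :
    FixedLengthBound τ e k := by
  induction k with
  | zero => exact h₀
  | succ k ih => exact fixedLengthBound_succ h₀ ih

theorem fixedLengthBound : ∀ e k : ℕ, FixedLengthBound τ e k
  | 0 => fixedLengthBound_of_zero fixedLengthBound_zero_zero
  | e + 1 => fixedLengthBound_of_zero (fixedLengthBound_succ_zero (fixedLengthBound e))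

end GroupAction

section GModule

variable {G A M : Type*} [Group G] [CommRing A] [MulSemiringAction G A] [AddCommGroup M]
  [Module A M] [DistribMulAction G M]

def Submodule.translate (hcompat : ∀ (g : G) (a : A) (m : M), g • (a • m) = (g • a) • (g • m))
    (g : G) (N : Submodule A M) : Submodule A M where
  carrier := {m | g⁻¹ • m ∈ N}
  add_mem' {m m'} hm hm' := show g⁻¹ • (m + m') ∈ N from (smul_add g⁻¹ m m').symm ▸ N.add_mem hm hm'
  zero_mem' := show g⁻¹ • (0 : M) ∈ N from (smul_zero (A := M) g⁻¹).symm ▸ N.zero_mem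
  smul_mem' a m hm := show g⁻¹ • (a • m) ∈ N from (hcompat g⁻¹ a m).symm ▸ N.smul_mem _ hm

variable (hcompat : ∀ (g : G) (a : A) (m : M), g • (a • m) = (g • a) • (g • m))

theorem Submodule.mem_translate {g : G} {N : Submodule A M} {m : M} :
    m ∈ N.translate hcompat g ↔ g⁻¹ • m ∈ N := Iff.rfl

def submoduleTranslation : G →* Submodule A M ≃o Submodule A M where
  toFun g :=
    { toFun := Submodule.translate hcompat g
      invFun := Submodule.translate hcompat g⁻¹
      left_inv N := by ext; simp [Submodule.mem_translate]
      right_inv N := by ext; simp [Submodule.mem_translate]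
      map_rel_iff' {N N'} := ⟨fun h m hm => by
          simpa [Submodule.mem_translate] using
            h (show g • m ∈ N.translate hcompat g by simpa [Submodule.mem_translate]),
        fun h _ hm => h hm⟩ }
  map_one' := by ext; simp [Submodule.mem_translate]
  map_mul' g h := by ext; simp [Submodule.mem_translate, RelIso.mul_apply, mul_smul]

theorem mem_fixedSublattice_submoduleTranslation {N : Submodule A M} :
    N ∈ fixedSublattice (submoduleTranslation hcompat) ↔ ∀ g : G, ∀ m ∈ N, g • m ∈ N := by
  refine ⟨fun h g m hm => ?_, fun h g => ?_⟩
  · rw [← h g]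
    simpa [submoduleTranslation, Submodule.mem_translate] using hm
  · ext m
    refine ⟨fun hm => ?_, fun hm => h g⁻¹ m hm⟩
    simpa using h g _ hm

end GModule

/-- Let `G` be a finite group of order `n` acting by ring automorphisms
on a commutative noetherian ring `A` of finite Krull dimension `d`, and let `M` be a
finitely generated `GA`-module (an `A`-module with a compatible `G`-action) whose Krull
dimension as an `A`-module is at most `d` (i.e. `ℓ_A(M) < ω^(d+1)`, the ordinal length
`ℓ_A(M)` being `gtRank ⊥` in the lattice of `A`-submodules). Writing
`ℓ_A(M) = ω^d·ℓ_d(M) + ρ` and `ℓ_{GA}(M) = ω^d·ℓ_{G,d}(M) + ρ'` with `ρ, ρ' < ω^d`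
(where `ℓ_{GA}(M)` is `gtRank ⊥` in the lattice of `G`-invariant `A`-submodules), we have
`ℓ_{G,d}(M) ≤ ℓ_d(M) ≤ n·ℓ_{G,d}(M)`. -/
theorem length_coefficient_bounds_for_finite_group_action
    (G : Type u) [Group G] [Finite G] (n : ℕ) (hn : Nat.card G = n)
    (A : Type u) [CommRing A] [IsNoetherianRing A] [MulSemiringAction G A]
    (d : ℕ)
    (M : Type u) [AddCommGroup M] [Module A M] [Module.Finite A M]
    [DistribMulAction G M]
    (hcompat : ∀ (g : G) (a : A) (m : M), g • (a • m) = (g • a) • (g • m))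
    (ld lGd : ℕ) (ρ ρ' : Ordinal.{u})
    (hρ : ρ < Ordinal.omega0 ^ (d : Ordinal.{u}))
    (hρ' : ρ' < Ordinal.omega0 ^ (d : Ordinal.{u}))
    (hl : gtRank (⊥ : Submodule A M) = Ordinal.omega0 ^ (d : Ordinal.{u}) * ld + ρ)
    (hlG : gtRank ((⟨⊥, fun g m hm => by simp at hm; simp [hm]⟩ :
        {N : Submodule A M // ∀ g : G, ∀ m ∈ N, g • m ∈ N}))
      = Ordinal.omega0 ^ (d : Ordinal.{u}) * lGd + ρ') :
    lGd ≤ ld ∧ ld ≤ n * lGd := by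
  let φ : {N : Submodule A M // ∀ g : G, ∀ m ∈ N, g • m ∈ N} ≃o
      fixedSublattice (submoduleTranslation hcompat) :=
    { Equiv.subtypeEquivRight fun _ => (mem_fixedSublattice_submoduleTranslation hcompat).symm with
      map_rel_iff' := Iff.rfl }
  let bot : {N : Submodule A M // ∀ g : G, ∀ m ∈ N, g • m ∈ N} :=
    ⟨⊥, fun g m hm => by simp at hm; simp [hm]⟩
  let top : {N : Submodule A M // ∀ g : G, ∀ m ∈ N, g • m ∈ N} := ⟨⊤, fun _ _ _ => trivial⟩
  have hlen : len (⊥ : Submodule A M) ⊤ = ω ^ (d : Ordinal) * ld + ρ :=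
    (gtRank_eq_len fun _ => le_top).symm.trans hl
  have hlenG : len (φ bot) (φ top) = ω ^ (d : Ordinal) * lGd + ρ' := by
    rw [OrderIso.len_map, ← gtRank_eq_len fun N => show N.1 ≤ ⊤ from le_top]
    exact hlG
  have hbt : φ bot ≤ φ top := φ.monotone (show (⊥ : Submodule A M) ≤ ⊤ from bot_le)
  have hlower : len (φ bot) (φ top) ≤ len (⊥ : Submodule A M) ⊤ :=
    len_le_len_of_strictMonoOn (x := φ bot) (b := φ top) ((Subtype.strictMono_coe _).strictMonoOn _)
  have hupper : len (⊥ : Submodule A M) ⊤ < ω ^ (d : Ordinal) * (n * lGd + 1 : ℕ) :=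
    hn ▸ fixedLengthBound d lGd hbt (hlenG ▸ opow_mul_add_lt hρ')
  refine ⟨le_of_opow_mul_le_of_lt (le_self_add.trans (hlenG ▸ hlower)) (hlen ▸ opow_mul_add_lt hρ),
    le_of_opow_mul_le_of_lt le_self_add (hlen ▸ hupper)⟩
end
end
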